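/- arXiv:1407.5155 — 3 statements merged into one kernel-verified Lean document; each statement's English description precedes it below -/
import Mathlib

section
/- Let D° ∈ 𝒟 with μ_k(D°) < 1/2. Let α° ∈ ℝ^p have support J of size k, set s° = sign(α°), and assume min_{j∈J}|α°_j| ≥ α̲ > 0 and ‖α°‖₂ ≤ M_α; let ε ∈ ℝ^m with ‖ε‖₂ ≤ M_ε, and set x = D°α° + ε. Assume λ ≤ α̲/2. Let D ∈ 𝒟 with r := ‖D − D°‖_F < (2λ/(7M_α))·(1 − 2μ_k(D°)), and assume M_ε < λ(1 − 2μ_k(D°)) − (7/2)·M_α·r. Then α̂_x(D|s°) is the unique minimizer over ℝ^p of α ↦ ½‖x − Dα‖₂² + λ‖α‖₁, sign(α̂_x(D|s°)) = s°, and f_x(D) = φ_x(D|s°); the same conclusions hold for D° in place of D, so f_x(D) − f_x(D°) = Δφ_x(D;D°|s°). -/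
open MeasureTheory Matrix Finset
open scoped ENNReal NNReal

noncomputable section

/-- squared ℓ² norm of a vector -/
def l2sq {n : Type*} [Fintype n] (v : n → ℝ) : ℝ := ∑ i, v i ^ 2

/-- ℓ² norm of a vector -/
def l2 {n : Type*} [Fintype n] (v : n → ℝ) : ℝ := Real.sqrt (l2sq v)

/-- ℓ¹ norm of a vector -/
def l1 {n : Type*} [Fintype n] (v : n → ℝ) : ℝ := ∑ i, |v i|

/-- ℓ^∞ (sup) norm of a vector -/
def linf {n : Type*} (v : n → ℝ) : ℝ := sSup (Set.range fun i => |v i|)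

/-- squared Frobenius norm -/
def frobSq {n q : Type*} [Fintype n] [Fintype q] (A : Matrix n q ℝ) : ℝ :=
  ∑ i, ∑ j, A i j ^ 2

/-- Frobenius norm -/
def frob {n q : Type*} [Fintype n] [Fintype q] (A : Matrix n q ℝ) : ℝ :=
  Real.sqrt (frobSq A)

/-- spectral (operator ℓ²→ℓ²) norm -/
def spec {n q : Type*} [Fintype n] [Fintype q] (A : Matrix n q ℝ) : ℝ :=
  sSup {t : ℝ | ∃ x : q → ℝ, l2 x ≤ 1 ∧ t = l2 (A.mulVec x)}

/-- operator ℓ∞→ℓ∞ norm: max row sum of absolute values -/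
def opInf {n q : Type*} [Fintype q] (A : Matrix n q ℝ) : ℝ :=
  sSup (Set.range fun i => ∑ j, |A i j|)

/-- j-th column of a matrix -/
def col {m p : ℕ} (D : Matrix (Fin m) (Fin p) ℝ) (j : Fin p) : Fin m → ℝ :=
  fun i => D i j

/-- the oblique manifold: matrices with unit ℓ²-norm columns -/
def Oblique {m p : ℕ} (D : Matrix (Fin m) (Fin p) ℝ) : Prop :=
  ∀ j, l2sq (_root_.col D j) = 1

/-- cumulative coherence μ_k -/
def mu {m p : ℕ} (k : ℕ) (D : Matrix (Fin m) (Fin p) ℝ) : ℝ :=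
  sSup {t : ℝ | ∃ J : Finset (Fin p), J.card ≤ k ∧ ∃ j, j ∉ J ∧
    t = ∑ i ∈ J, |∑ r, D r i * D r j|}

/-- lower restricted isometry constant δ̲_k -/
def deltaLow {m p : ℕ} (k : ℕ) (D : Matrix (Fin m) (Fin p) ℝ) : ℝ :=
  sInf {δ : ℝ | 0 ≤ δ ∧ ∀ J : Finset (Fin p), J.card = k →
    ∀ z : Fin p → ℝ, (∀ i, i ∉ J → z i = 0) →
      (1 - δ) * l2sq z ≤ l2sq (D.mulVec z)}

/-- upper restricted isometry constant δ̄_k -/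
def deltaUp {m p : ℕ} (k : ℕ) (D : Matrix (Fin m) (Fin p) ℝ) : ℝ :=
  sInf {δ : ℝ | 0 ≤ δ ∧ ∀ J : Finset (Fin p), J.card = k →
    ∀ z : Fin p → ℝ, (∀ i, i ∉ J → z i = 0) →
      l2sq (D.mulVec z) ≤ (1 + δ) * l2sq z}

/-- submatrix D_J of the columns indexed by J -/
def colsub {m p : ℕ} (D : Matrix (Fin m) (Fin p) ℝ) (J : Finset (Fin p)) :
    Matrix (Fin m) J ℝ := fun i j => D i j.1

/-- Gram matrix D_Jᵀ D_J -/
def gram {m p : ℕ} (D : Matrix (Fin m) (Fin p) ℝ) (J : Finset (Fin p)) :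
    Matrix J J ℝ := (colsub D J)ᵀ * colsub D J

/-- Θ_J(D) = (D_Jᵀ D_J)⁻¹ -/
def theta {m p : ℕ} (D : Matrix (Fin m) (Fin p) ℝ) (J : Finset (Fin p)) :
    Matrix J J ℝ := (gram D J)⁻¹

/-- pseudo-inverse D_J⁺ = Θ_J D_Jᵀ -/
def pinv {m p : ℕ} (D : Matrix (Fin m) (Fin p) ℝ) (J : Finset (Fin p)) :
    Matrix J (Fin m) ℝ := theta D J * (colsub D J)ᵀ

/-- orthogonal projector P_J(D) = D_J Θ_J D_Jᵀ -/
def proj {m p : ℕ} (D : Matrix (Fin m) (Fin p) ℝ) (J : Finset (Fin p)) :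
    Matrix (Fin m) (Fin m) ℝ := colsub D J * pinv D J

/-- Lasso objective L_x(D, α) -/
def lasso {m p : ℕ} (lam : ℝ) (x : Fin m → ℝ) (D : Matrix (Fin m) (Fin p) ℝ)
    (a : Fin p → ℝ) : ℝ :=
  (1/2) * l2sq (fun i => x i - D.mulVec a i) + lam * l1 a

/-- f_x(D) = inf_α L_x(D, α) -/
def fobj {m p : ℕ} (lam : ℝ) (x : Fin m → ℝ) (D : Matrix (Fin m) (Fin p) ℝ) : ℝ :=
  ⨅ a : Fin p → ℝ, lasso lam x D a

/-- φ_x(D|s) for a sign vector s with support J -/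
def phi {m p : ℕ} (lam : ℝ) (x : Fin m → ℝ) (D : Matrix (Fin m) (Fin p) ℝ)
    (J : Finset (Fin p)) (s : Fin p → ℝ) : ℝ :=
  (1/2) * (l2sq x - ∑ a : J, ∑ b : J,
    ((colsub D J)ᵀ.mulVec x a - lam * s a.1) * theta D J a b
      * ((colsub D J)ᵀ.mulVec x b - lam * s b.1))

/-- α̂_x(D|s): the closed-form candidate minimizer with sign pattern s and support J -/
def alphaHat {m p : ℕ} (lam : ℝ) (x : Fin m → ℝ) (D : Matrix (Fin m) (Fin p) ℝ)
    (J : Finset (Fin p)) (s : Fin p → ℝ) : Fin p → ℝ :=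
  fun i => if h : i ∈ J then
    (pinv D J).mulVec x ⟨i, h⟩ - lam * (theta D J).mulVec (fun a => s a.1) ⟨i, h⟩
  else 0

/-- sign vector of a coefficient vector -/
def sgnv {p : ℕ} (a : Fin p → ℝ) : Fin p → ℝ := fun i => Real.sign (a i)

/-- the noisy signal x = D° α° + ε -/
def xsig {m p : ℕ} (Do : Matrix (Fin m) (Fin p) ℝ) (a : Fin p → ℝ) (e : Fin m → ℝ) :
    Fin m → ℝ := fun i => Do.mulVec a i + e i

/-- average over all subsets J ⊆ {1,…,p} of size k -/
def EJ {p : ℕ} (k : ℕ) (f : Finset (Fin p) → ℝ) : ℝ :=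
  ((p.choose k : ℝ))⁻¹ * ∑ S ∈ Finset.powersetCard k (Finset.univ : Finset (Fin p)), f S

/-- the constant C_min -/
def CminV {m p : ℕ} (k : ℕ) (Do : Matrix (Fin m) (Fin p) ℝ) (Ea2 Ea1 : ℝ) : ℝ :=
  24 * (Ea1 / Real.sqrt Ea2) ^ 2 * (spec Do + 1) * ((k : ℝ) / (p : ℝ)) *
    frob (Doᵀ * Do - (1 : Matrix (Fin p) (Fin p) ℝ))

/-- the constant C_max -/
def CmaxV {m p : ℕ} (k : ℕ) (Do : Matrix (Fin m) (Fin p) ℝ) (Ea1 Malpha : ℝ) : ℝ :=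
  (2/7) * (Ea1 / Malpha) * (1 - 2 * mu k Do)

/-- The Basic signal model (Assumption 1 together with the generative mechanism):
J is uniform over size-k supports, α° is supported on J with white coefficients and signs,
and the noise is decorrelated from the coefficients and white.  Conditional expectations given
J are expressed as integrals over the events {J = S}. -/
structure IsBasicModel {m p : ℕ} (k : ℕ) {Ω : Type*} [MeasurableSpace Ω] (μ : Measure Ω)
    (Jv : Ω → Finset (Fin p)) (av : Ω → Fin p → ℝ) (ev : Ω → Fin m → ℝ)
    (Ea2 Ea1 Ee2 : ℝ) : Prop where
  prob : IsProbabilityMeasure μ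
  measJ : ∀ S : Finset (Fin p), MeasurableSet {ω | Jv ω = S}
  measa : ∀ i, Measurable fun ω => av ω i
  mease : ∀ i, Measurable fun ω => ev ω i
  Ea2_pos : 0 < Ea2
  Ea1_pos : 0 < Ea1
  unif : ∀ S : Finset (Fin p), S.card = k →
    μ {ω | Jv ω = S} = ((p.choose k : ℝ≥0∞))⁻¹
  support : ∀ᵐ ω ∂μ, ∀ i, i ∉ Jv ω → av ω i = 0
  coeffWhite : ∀ S : Finset (Fin p), S.card = k → ∀ i ∈ S, ∀ j ∈ S,
    ∫ ω in {ω | Jv ω = S}, av ω i * av ω j ∂μ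
      = (if i = j then Ea2 else 0) * (μ {ω | Jv ω = S}).toReal
  signWhite : ∀ S : Finset (Fin p), S.card = k → ∀ i ∈ S, ∀ j ∈ S,
    ∫ ω in {ω | Jv ω = S}, Real.sign (av ω i) * Real.sign (av ω j) ∂μ
      = (if i = j then 1 else 0) * (μ {ω | Jv ω = S}).toReal
  coeffSign : ∀ S : Finset (Fin p), S.card = k → ∀ i ∈ S, ∀ j ∈ S,
    ∫ ω in {ω | Jv ω = S}, av ω i * Real.sign (av ω j) ∂μ
      = (if i = j then Ea1 else 0) * (μ {ω | Jv ω = S}).toReal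
  noiseCoeff : ∀ S : Finset (Fin p), S.card = k → ∀ i : Fin m, ∀ j ∈ S,
    ∫ ω in {ω | Jv ω = S}, ev ω i * av ω j ∂μ = 0
  noiseSign : ∀ S : Finset (Fin p), S.card = k → ∀ i : Fin m, ∀ j ∈ S,
    ∫ ω in {ω | Jv ω = S}, ev ω i * Real.sign (av ω j) ∂μ = 0
  noiseWhite : ∀ S : Finset (Fin p), S.card = k → ∀ i j : Fin m,
    ∫ ω in {ω | Jv ω = S}, ev ω i * ev ω j ∂μ
      = (if i = j then Ee2 else 0) * (μ {ω | Jv ω = S}).toReal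

/-- The Bounded signal model (Assumption 2): almost sure lower bound on nonzero coefficients,
and almost sure ℓ² bounds on the coefficient vector and the noise. -/
structure IsBoundedModel {m p : ℕ} {Ω : Type*} [MeasurableSpace Ω] (μ : Measure Ω)
    (Jv : Ω → Finset (Fin p)) (av : Ω → Fin p → ℝ) (ev : Ω → Fin m → ℝ)
    (alphaMin Malpha Meps : ℝ) : Prop where
  alphaMin_pos : 0 < alphaMin
  Malpha_pos : 0 < Malpha
  coeffFloor : ∀ᵐ ω ∂μ, ∀ i ∈ Jv ω, alphaMin ≤ |av ω i|
  coeffBound : ∀ᵐ ω ∂μ, l2 (av ω) ≤ Malpha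
  noiseBound : ∀ᵐ ω ∂μ, l2 (ev ω) ≤ Meps

end

/-! Fuchs' certificate: `α̂ = α̂_x(D|s°)` is the unique Lasso minimizer as soon as
`D_Jᵀ (x - D α̂) = λ sign α̂_J`, `|d_jᵀ (x - D α̂)| < λ` for `j ∉ J`, and `D_J` is injective.
If the cumulative coherence is `μ < 1/2`, then `D_Jᵀ D_J = 1 + E` with absolute row sums of `E`
at most `μ`. This gives injectivity, invertibility and `‖α̂_J - α°_J‖_∞ ≤ (η + λ)/(1 - μ) < 2λ ≤ α̲`
(so the signs of `α°` are recovered), as well as the strict off-support bound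
`η + μ (η + λ)/(1 - μ) < λ`, where `η < λ (1 - 2μ)` bounds the correlations of the atoms with
`x - D α°`. For `D°`, `η ≤ M_ε`; passing to `D` raises the coherence by at most
`(1 + √(1 + μ)) √k r` and `η` by `M_α r`, and `√k λ ≤ M_α / 2` turns the hypothesis on `M_ε`
into `η < λ (1 - 2 μ_k(D))`.
-/

namespace Real

lemma sign_mul_self_eq_abs (b : ℝ) : Real.sign b * b = |b| := by
  rcases lt_trichotomy b 0 with h | rfl | h
  · rw [sign_of_neg h, abs_of_neg h, neg_one_mul]
  · simp
  · rw [sign_of_pos h, abs_of_pos h, one_mul]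

lemma abs_sign_le_one (b : ℝ) : |Real.sign b| ≤ 1 := by
  rcases sign_apply_eq b with h | h | h <;> simp [h]

lemma sign_eq_of_abs_sub_lt {a b : ℝ} (h : |b - a| < |a|) : Real.sign b = Real.sign a := by
  rcases lt_trichotomy a 0 with ha | rfl | ha
  · rw [abs_of_neg ha] at h
    rw [sign_of_neg ha, sign_of_neg (by linarith [le_abs_self (b - a)])]
  · simp only [abs_zero] at h
    exact absurd h (abs_nonneg _).not_gt
  · rw [abs_of_pos ha] at h
    rw [sign_of_pos ha, sign_of_pos (by linarith [neg_abs_le (b - a)])]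

end Real

section Euclidean

variable {n q : Type*} [Fintype n] [Fintype q]

lemma l2sq_eq_dotProduct (v : n → ℝ) : l2sq v = v ⬝ᵥ v := by
  simp only [l2sq, dotProduct, sq]

lemma l2sq_nonneg (v : n → ℝ) : 0 ≤ l2sq v :=
  Finset.sum_nonneg fun i _ => sq_nonneg (v i)

lemma l2_nonneg (v : n → ℝ) : 0 ≤ l2 v := Real.sqrt_nonneg _

lemma l2_sq (v : n → ℝ) : l2 v ^ 2 = l2sq v := Real.sq_sqrt (l2sq_nonneg v)

lemma abs_dotProduct_le (u v : n → ℝ) : |u ⬝ᵥ v| ≤ l2 u * l2 v := by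
  rw [l2, l2, ← Real.sqrt_mul (l2sq_nonneg u)]
  exact Real.abs_le_sqrt (Finset.sum_mul_sq_le_sq_mul_sq _ u v)

lemma l2_add_le (u v : n → ℝ) : l2 (u + v) ≤ l2 u + l2 v := by
  refine Real.sqrt_le_iff.2 ⟨add_nonneg (l2_nonneg u) (l2_nonneg v), ?_⟩
  have hexp : l2sq (u + v) = l2sq u + 2 * (u ⬝ᵥ v) + l2sq v := by
    simp only [l2sq_eq_dotProduct, add_dotProduct, dotProduct_add, dotProduct_comm v u]
    ring
  rw [hexp, add_sq, l2_sq, l2_sq]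
  linarith [le_of_abs_le (abs_dotProduct_le u v)]

lemma frobSq_nonneg (A : Matrix n q ℝ) : 0 ≤ frobSq A :=
  Finset.sum_nonneg fun i _ => Finset.sum_nonneg fun j _ => sq_nonneg (A i j)

lemma frob_zero : frob (0 : Matrix n q ℝ) = 0 := by
  simp [frob, frobSq]

lemma frob_nonneg (A : Matrix n q ℝ) : 0 ≤ frob A := Real.sqrt_nonneg _

lemma l2_mulVec_le (A : Matrix n q ℝ) (z : q → ℝ) : l2 (A *ᵥ z) ≤ frob A * l2 z := by
  rw [l2, l2, frob, ← Real.sqrt_mul (frobSq_nonneg A)]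
  refine Real.sqrt_le_sqrt ?_
  simp only [l2sq, frobSq, mulVec, dotProduct]
  rw [Finset.sum_mul]
  exact Finset.sum_le_sum fun i _ => Finset.sum_mul_sq_le_sq_mul_sq _ _ _

lemma l2_transpose_mulVec_le {A : Matrix n q ℝ} {C : ℝ} (hC : 0 ≤ C)
    (hA : ∀ z, l2 (A *ᵥ z) ≤ C * l2 z) (e : n → ℝ) : l2 (Aᵀ *ᵥ e) ≤ C * l2 e := by
  set w := Aᵀ *ᵥ e
  have hw : l2 w * l2 w ≤ l2 w * (C * l2 e) := calc
    l2 w * l2 w = w ⬝ᵥ Aᵀ *ᵥ e := by rw [← sq, l2_sq, l2sq_eq_dotProduct]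
    _ = (A *ᵥ w) ⬝ᵥ e := by rw [dotProduct_mulVec, vecMul_transpose]
    _ ≤ l2 (A *ᵥ w) * l2 e := le_of_abs_le (abs_dotProduct_le _ _)
    _ ≤ C * l2 w * l2 e := mul_le_mul_of_nonneg_right (hA w) (l2_nonneg e)
    _ = l2 w * (C * l2 e) := by ring
  rcases (l2_nonneg w).eq_or_lt with h | h
  · rw [← h]
    exact mul_nonneg hC (l2_nonneg e)
  · exact le_of_mul_le_mul_left hw h

lemma sum_abs_le_sqrt_card_mul {ι : Type*} (s : Finset ι) (f : ι → ℝ) :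
    ∑ i ∈ s, |f i| ≤ √s.card * √(∑ i ∈ s, f i ^ 2) := by
  rw [← Real.sqrt_mul (Nat.cast_nonneg _)]
  refine le_of_abs_le (Real.abs_le_sqrt ?_)
  simpa only [sq_abs] using sq_sum_le_card_mul_sum_sq (s := s) (f := fun i => |f i|)

lemma sqrt_card_mul_le_l2 {v : n → ℝ} {s : Finset n} {c : ℝ} (hc : 0 ≤ c)
    (hv : ∀ i ∈ s, c ≤ |v i|) : √s.card * c ≤ l2 v := by
  rw [← Real.sqrt_sq hc, ← Real.sqrt_mul (Nat.cast_nonneg _), l2]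
  refine Real.sqrt_le_sqrt ?_
  calc (s.card : ℝ) * c ^ 2 = ∑ i ∈ s, c ^ 2 := by rw [Finset.sum_const, nsmul_eq_mul]
    _ ≤ ∑ i ∈ s, v i ^ 2 := Finset.sum_le_sum fun i hi => by
        rw [← sq_abs (v i)]; exact pow_le_pow_left₀ hc (hv i hi) 2
    _ ≤ l2sq v := Finset.sum_le_sum_of_subset_of_nonneg (Finset.subset_univ s)
        fun i _ _ => sq_nonneg (v i)

end Euclidean

section Columns

variable {m p : ℕ}

lemma l2_col_of_oblique {D : Matrix (Fin m) (Fin p) ℝ} (hD : Oblique D) (j : Fin p) :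
    l2 (_root_.col D j) = 1 := by
  rw [l2, hD j, Real.sqrt_one]

lemma abs_transpose_mulVec_le {D : Matrix (Fin m) (Fin p) ℝ} (hD : Oblique D)
    (v : Fin m → ℝ) (j : Fin p) : |(Dᵀ *ᵥ v) j| ≤ l2 v := by
  have h := abs_dotProduct_le (_root_.col D j) v
  rwa [l2_col_of_oblique hD, one_mul] at h

lemma sum_l2sq_col_le_frobSq (A : Matrix (Fin m) (Fin p) ℝ) (s : Finset (Fin p)) :
    ∑ i ∈ s, l2sq (_root_.col A i) ≤ frobSq A := by
  rw [frobSq, Finset.sum_comm]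
  exact Finset.sum_le_sum_of_subset_of_nonneg (Finset.subset_univ s)
    fun i _ _ => l2sq_nonneg (_root_.col A i)

lemma l2_col_le_frob (A : Matrix (Fin m) (Fin p) ℝ) (j : Fin p) :
    l2 (_root_.col A j) ≤ frob A :=
  Real.sqrt_le_sqrt (by simpa using sum_l2sq_col_le_frobSq A {j})

lemma sum_l2_col_le (A : Matrix (Fin m) (Fin p) ℝ) (s : Finset (Fin p)) :
    ∑ i ∈ s, l2 (_root_.col A i) ≤ √s.card * frob A := by
  calc ∑ i ∈ s, l2 (_root_.col A i) = ∑ i ∈ s, |l2 (_root_.col A i)| :=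
        Finset.sum_congr rfl fun i _ => (abs_of_nonneg (l2_nonneg _)).symm
    _ ≤ √s.card * √(∑ i ∈ s, l2 (_root_.col A i) ^ 2) := sum_abs_le_sqrt_card_mul _ _
    _ ≤ √s.card * frob A := by
        simp only [l2_sq]
        exact mul_le_mul_of_nonneg_left (Real.sqrt_le_sqrt (sum_l2sq_col_le_frobSq A s))
          (Real.sqrt_nonneg _)

end Columns

section RowSumBound

variable {ι : Type*} [Fintype ι] {E : Matrix ι ι ℝ} {μ : ℝ}

lemma abs_dotProduct_mulVec_le_of_row_sum (hE : E.IsSymm) (hrow : ∀ a, ∑ b, |E a b| ≤ μ)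
    (z : ι → ℝ) : |z ⬝ᵥ E *ᵥ z| ≤ μ * (z ⬝ᵥ z) := by
  have hamgm : ∀ a b,
      |z a * (E a b * z b)| ≤ |E a b| * (z a ^ 2 / 2) + |E a b| * (z b ^ 2 / 2) := by
    intro a b
    rw [abs_mul, abs_mul, ← mul_add, mul_left_comm]
    refine mul_le_mul_of_nonneg_left ?_ (abs_nonneg _)
    nlinarith [sq_nonneg (|z a| - |z b|), sq_abs (z a), sq_abs (z b)]
  have hswap : ∑ a, ∑ b, |E a b| * (z b ^ 2 / 2) = ∑ a, ∑ b, |E a b| * (z a ^ 2 / 2) := by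
    rw [Finset.sum_comm]
    exact Finset.sum_congr rfl fun a _ => Finset.sum_congr rfl fun b _ => by rw [hE.apply]
  calc |z ⬝ᵥ E *ᵥ z| = |∑ a, ∑ b, z a * (E a b * z b)| := by
        simp only [dotProduct, mulVec, Finset.mul_sum]
    _ ≤ ∑ a, ∑ b, (|E a b| * (z a ^ 2 / 2) + |E a b| * (z b ^ 2 / 2)) :=
        (Finset.abs_sum_le_sum_abs _ _).trans <| Finset.sum_le_sum fun a _ =>
          (Finset.abs_sum_le_sum_abs _ _).trans <| Finset.sum_le_sum fun b _ => hamgm a b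
    _ = ∑ a, (∑ b, |E a b|) * z a ^ 2 := by
        rw [Finset.sum_congr rfl fun a _ => Finset.sum_add_distrib, Finset.sum_add_distrib, hswap,
          ← Finset.sum_add_distrib]
        exact Finset.sum_congr rfl fun a _ => by
          rw [← Finset.sum_add_distrib, Finset.sum_mul]
          exact Finset.sum_congr rfl fun b _ => by ring
    _ ≤ ∑ a, μ * z a ^ 2 :=
        Finset.sum_le_sum fun a _ => mul_le_mul_of_nonneg_right (hrow a) (sq_nonneg _)
    _ = μ * (z ⬝ᵥ z) := by simp only [dotProduct, Finset.mul_sum, sq]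

lemma abs_le_div_of_row_sum [DecidableEq ι] (hrow : ∀ a, ∑ b, |E a b| ≤ μ) (hμ : μ < 1)
    {y : ι → ℝ} {C : ℝ} (hC : ∀ a, |((1 + E) *ᵥ y) a| ≤ C) (a : ι) : |y a| ≤ C / (1 - μ) := by
  obtain ⟨a₀, -, hmax⟩ :=
    Finset.exists_max_image Finset.univ (fun b => |y b|) ⟨a, Finset.mem_univ a⟩
  have hEy : |(E *ᵥ y) a₀| ≤ μ * |y a₀| := calc
    |(E *ᵥ y) a₀| ≤ ∑ b, |E a₀ b| * |y b| :=
        (Finset.abs_sum_le_sum_abs _ _).trans_eq (Finset.sum_congr rfl fun b _ => abs_mul _ _)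
    _ ≤ ∑ b, |E a₀ b| * |y a₀| := Finset.sum_le_sum fun b _ =>
        mul_le_mul_of_nonneg_left (hmax b (Finset.mem_univ b)) (abs_nonneg _)
    _ ≤ μ * |y a₀| := by
        rw [← Finset.sum_mul]; exact mul_le_mul_of_nonneg_right (hrow a₀) (abs_nonneg _)
  have hy : |y a₀| ≤ C + μ * |y a₀| := calc
    |y a₀| = |((1 + E) *ᵥ y) a₀ - (E *ᵥ y) a₀| := by
        rw [add_mulVec, one_mulVec, Pi.add_apply, add_sub_cancel_right]
    _ ≤ C + μ * |y a₀| := (abs_sub _ _).trans (add_le_add (hC a₀) hEy)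
  exact (hmax a (Finset.mem_univ a)).trans ((le_div_iff₀ (sub_pos.2 hμ)).2 (by linarith))

lemma isUnit_one_add_of_row_sum [DecidableEq ι] (hrow : ∀ a, ∑ b, |E a b| ≤ μ) (hμ : μ < 1) :
    IsUnit (1 + E) := by
  refine mulVec_injective_iff_isUnit.1 fun y y' h => funext fun a => ?_
  have hzero : ∀ b, |((1 + E) *ᵥ (y - y')) b| ≤ 0 := fun b => by
    rw [mulVec_sub, h, sub_self, Pi.zero_apply, abs_zero]
  have := abs_le_div_of_row_sum hrow hμ hzero a
  rw [zero_div, Pi.sub_apply] at this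
  exact sub_eq_zero.1 (abs_nonpos_iff.1 this)

end RowSumBound

-- The bound `mu k D ≤ μ` itself, without the `sSup` in `mu` (which is `0` when `p = 0`).
def CoherenceBound {m p : ℕ} (D : Matrix (Fin m) (Fin p) ℝ) (k : ℕ) (μ : ℝ) : Prop :=
  ∀ J : Finset (Fin p), J.card ≤ k → ∀ j ∉ J, ∑ i ∈ J, |(Dᵀ * D) i j| ≤ μ

section Coherence

variable {m p : ℕ} {D : Matrix (Fin m) (Fin p) ℝ}

lemma abs_transpose_mul_self_le_one (hD : Oblique D) (i j : Fin p) : |(Dᵀ * D) i j| ≤ 1 := by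
  have h := abs_dotProduct_le (_root_.col D i) (_root_.col D j)
  rwa [l2_col_of_oblique hD, l2_col_of_oblique hD, one_mul] at h

lemma coherenceBound_mu (hD : Oblique D) (k : ℕ) : CoherenceBound D k (mu k D) := by
  refine fun J hJ j hj => le_csSup ⟨k, ?_⟩ ⟨J, hJ, j, hj, by simp [mul_apply]⟩
  rintro t ⟨J', hJ', j', -, rfl⟩
  calc ∑ i ∈ J', |∑ r, D r i * D r j'| ≤ ∑ _i ∈ J', (1 : ℝ) :=
        Finset.sum_le_sum fun i _ => by
          simpa [mul_apply] using abs_transpose_mul_self_le_one hD i j'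
    _ ≤ k := by simpa using hJ'

end Coherence

section Gram

variable {m p k : ℕ} {μ : ℝ} (D : Matrix (Fin m) (Fin p) ℝ) (J : Finset (Fin p))

lemma gram_eq_submatrix : _root_.gram D J = (Dᵀ * D).submatrix Subtype.val Subtype.val := by
  ext a b
  simp [_root_.gram, colsub, mul_apply]

lemma isSymm_transpose_mul {n q : Type*} [Fintype n] (A : Matrix n q ℝ) : (Aᵀ * A).IsSymm := by
  rw [IsSymm, transpose_mul, transpose_transpose]

lemma isSymm_gram : (_root_.gram D J).IsSymm := isSymm_transpose_mul (colsub D J)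

lemma transpose_colsub_mulVec (u : Fin m → ℝ) : (colsub D J)ᵀ *ᵥ u = J.restrict (Dᵀ *ᵥ u) :=
  rfl

lemma mulVec_eq_colsub_mulVec_restrict {v : Fin p → ℝ} (hv : ∀ i ∉ J, v i = 0) :
    D *ᵥ v = colsub D J *ᵥ J.restrict v := by
  funext r
  simp only [mulVec, dotProduct, colsub, Finset.restrict]
  rw [Finset.sum_coe_sort J (fun i => D r i * v i)]
  exact (Finset.sum_subset (Finset.subset_univ J) fun i _ hi => by rw [hv i hi, mul_zero]).symm

lemma l2sq_colsub_mulVec (z : J → ℝ) : l2sq (colsub D J *ᵥ z) = z ⬝ᵥ _root_.gram D J *ᵥ z := by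
  rw [_root_.gram, ← mulVec_mulVec, dotProduct_mulVec, vecMul_transpose, l2sq_eq_dotProduct]

variable {D J}

lemma transpose_mul_self_apply_self (hD : Oblique D) (j : Fin p) : (Dᵀ * D) j j = 1 := by
  rw [← hD j]
  simp [mul_apply, l2sq, _root_.col, sq]

lemma row_sum_gram_sub_one_le (hD : Oblique D) (hcoh : CoherenceBound D k μ) (hJ : J.card ≤ k)
    (a : J) : ∑ b, |(_root_.gram D J - 1) a b| ≤ μ := by
  have hentry : ∀ b : J,
      (_root_.gram D J - 1) a b = (Dᵀ * D - 1 : Matrix (Fin p) (Fin p) ℝ) a b := by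
    intro b
    rw [Matrix.sub_apply, Matrix.sub_apply, gram_eq_submatrix, submatrix_apply]
    by_cases h : a = b
    · rw [h, one_apply_eq, one_apply_eq]
    · rw [one_apply_ne h, one_apply_ne fun h' => h (Subtype.ext h')]
  calc ∑ b, |(_root_.gram D J - 1) a b|
        = ∑ i ∈ J, |(Dᵀ * D - 1 : Matrix (Fin p) (Fin p) ℝ) a.1 i| := by
        simp only [hentry]
        exact Finset.sum_coe_sort J (fun i => |(Dᵀ * D - 1 : Matrix (Fin p) (Fin p) ℝ) a.1 i|)
    _ = ∑ i ∈ J.erase a.1, |(Dᵀ * D - 1 : Matrix (Fin p) (Fin p) ℝ) a.1 i| := by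
        refine (Finset.sum_erase J ?_).symm
        rw [Matrix.sub_apply, one_apply_eq, transpose_mul_self_apply_self hD, sub_self, abs_zero]
    _ = ∑ i ∈ J.erase a.1, |(Dᵀ * D) i a.1| := Finset.sum_congr rfl fun i hi => by
        rw [Matrix.sub_apply, one_apply_ne (Finset.ne_of_mem_erase hi).symm, sub_zero]
        exact congrArg abs ((isSymm_transpose_mul D).apply i a.1)
    _ ≤ μ := hcoh _ (Finset.card_erase_le.trans hJ) a.1 (Finset.notMem_erase _ _)

lemma abs_l2sq_colsub_mulVec_sub_le (hD : Oblique D) (hcoh : CoherenceBound D k μ)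
    (hJ : J.card ≤ k) (z : J → ℝ) : |l2sq (colsub D J *ᵥ z) - z ⬝ᵥ z| ≤ μ * (z ⬝ᵥ z) := by
  have h := abs_dotProduct_mulVec_le_of_row_sum ((isSymm_gram D J).sub isSymm_one)
    (row_sum_gram_sub_one_le hD hcoh hJ) z
  rwa [sub_mulVec, dotProduct_sub, one_mulVec, ← l2sq_colsub_mulVec] at h

lemma l2_colsub_mulVec_le (hD : Oblique D) (hcoh : CoherenceBound D k μ) (hJ : J.card ≤ k)
    (z : J → ℝ) : l2 (colsub D J *ᵥ z) ≤ √(1 + μ) * l2 z := by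
  rw [l2, l2, ← Real.sqrt_mul' _ (l2sq_nonneg z)]
  refine Real.sqrt_le_sqrt ?_
  have h := (abs_le.1 (abs_l2sq_colsub_mulVec_sub_le hD hcoh hJ z)).2
  rw [l2sq_eq_dotProduct z]
  linarith

lemma l2sq_mulVec_pos (hD : Oblique D) (hcoh : CoherenceBound D k μ) (hμ : μ < 1)
    (hJ : J.card ≤ k) {g : Fin p → ℝ} (hg : ∀ i ∉ J, g i = 0) (hne : g ≠ 0) :
    0 < l2sq (D *ᵥ g) := by
  have hz : J.restrict g ≠ 0 := fun h => hne <| funext fun i => by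
    by_cases hi : i ∈ J
    · exact congrFun h ⟨i, hi⟩
    · exact hg i hi
  have hpos : 0 < J.restrict g ⬝ᵥ J.restrict g :=
    lt_of_le_of_ne (l2sq_eq_dotProduct (J.restrict g) ▸ l2sq_nonneg _)
      (Ne.symm (dotProduct_self_eq_zero.not.2 hz))
  have h := (abs_le.1 (abs_l2sq_colsub_mulVec_sub_le hD hcoh hJ (J.restrict g))).1
  rw [mulVec_eq_colsub_mulVec_restrict D J hg]
  nlinarith

end Gram

section Perturbation

variable {m p k : ℕ} {μ : ℝ} {D Do : Matrix (Fin m) (Fin p) ℝ}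

lemma sum_abs_transpose_mul_le_of_oblique (hD : Oblique D) (A : Matrix (Fin m) (Fin p) ℝ)
    (J : Finset (Fin p)) (j : Fin p) : ∑ i ∈ J, |(Aᵀ * D) i j| ≤ √J.card * frob A := by
  refine (Finset.sum_le_sum fun i _ => ?_).trans (sum_l2_col_le A J)
  have h := abs_dotProduct_le (_root_.col A i) (_root_.col D j)
  rwa [l2_col_of_oblique hD, mul_one] at h

lemma sum_abs_transpose_mul_le_of_coherence (hD : Oblique D) (hcoh : CoherenceBound D k μ)
    {J : Finset (Fin p)} (hJ : J.card ≤ k) (A : Matrix (Fin m) (Fin p) ℝ) (j : Fin p) :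
    ∑ i ∈ J, |(Dᵀ * A) i j| ≤ √J.card * (√(1 + μ) * frob A) := by
  have hcard : ((Finset.univ : Finset J).card : ℝ) = J.card := by simp
  calc ∑ i ∈ J, |(Dᵀ * A) i j| = ∑ a : J, |((colsub D J)ᵀ *ᵥ _root_.col A j) a| :=
        (Finset.sum_coe_sort J fun i => |(Dᵀ * A) i j|).symm
    _ ≤ √J.card * l2 ((colsub D J)ᵀ *ᵥ _root_.col A j) := by
        simpa only [hcard, l2, l2sq] using sum_abs_le_sqrt_card_mul (Finset.univ : Finset J) _
    _ ≤ √J.card * (√(1 + μ) * frob A) := by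
        refine mul_le_mul_of_nonneg_left ?_ (Real.sqrt_nonneg _)
        refine (l2_transpose_mulVec_le (Real.sqrt_nonneg _)
          (l2_colsub_mulVec_le hD hcoh hJ) _).trans ?_
        exact mul_le_mul_of_nonneg_left (l2_col_le_frob A j) (Real.sqrt_nonneg _)

theorem coherenceBound_of_frob_sub (hDo : Oblique Do) (hD : Oblique D)
    (hcoh : CoherenceBound Do k μ) :
    CoherenceBound D k (μ + (1 + √(1 + μ)) * (√k * frob (D - Do))) := by
  intro J hJ j hj
  have hsplit : Dᵀ * D = Doᵀ * Do + (D - Do)ᵀ * D + Doᵀ * (D - Do) := by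
    rw [transpose_sub, Matrix.sub_mul, Matrix.mul_sub]
    abel
  have hk : √J.card * frob (D - Do) ≤ √k * frob (D - Do) :=
    mul_le_mul_of_nonneg_right (Real.sqrt_le_sqrt (by exact_mod_cast hJ)) (frob_nonneg _)
  have hk' := mul_le_mul_of_nonneg_left hk (Real.sqrt_nonneg (1 + μ))
  calc ∑ i ∈ J, |(Dᵀ * D) i j|
      ≤ ∑ i ∈ J, (|(Doᵀ * Do) i j| + |((D - Do)ᵀ * D) i j| + |(Doᵀ * (D - Do)) i j|) :=
        Finset.sum_le_sum fun i _ => by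
          rw [hsplit, Matrix.add_apply, Matrix.add_apply]
          exact (abs_add_le _ _).trans (add_le_add_left (abs_add_le _ _) _)
    _ ≤ μ + √J.card * frob (D - Do) + √J.card * (√(1 + μ) * frob (D - Do)) := by
        rw [Finset.sum_add_distrib, Finset.sum_add_distrib]
        gcongr
        · exact hcoh J hJ j hj
        · exact sum_abs_transpose_mul_le_of_oblique hD _ J j
        · exact sum_abs_transpose_mul_le_of_coherence hDo hcoh hJ _ j
    _ ≤ μ + (1 + √(1 + μ)) * (√k * frob (D - Do)) := by linarith

end Perturbation

section Lasso

variable {m p : ℕ} {lam : ℝ} {x : Fin m → ℝ} {D : Matrix (Fin m) (Fin p) ℝ}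

lemma lasso_sub_lasso (a β : Fin p → ℝ) :
    lasso lam x D a - lasso lam x D β
      = (1 / 2) * l2sq (D *ᵥ (a - β))
        + ∑ i, (lam * |a i| - (Dᵀ *ᵥ (x - D *ᵥ β)) i * a i)
        - ∑ i, (lam * |β i| - (Dᵀ *ᵥ (x - D *ᵥ β)) i * β i) := by
  have hres : x - D *ᵥ a = (x - D *ᵥ β) - D *ᵥ (a - β) := by
    rw [mulVec_sub, sub_sub_sub_cancel_right]
  set u := x - D *ᵥ β
  have hcross : u ⬝ᵥ D *ᵥ (a - β) = (Dᵀ *ᵥ u) ⬝ᵥ a - (Dᵀ *ᵥ u) ⬝ᵥ β := by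
    rw [dotProduct_mulVec, ← mulVec_transpose, dotProduct_sub]
  have hsq : l2sq (x - D *ᵥ a) = l2sq u - 2 * (u ⬝ᵥ D *ᵥ (a - β)) + l2sq (D *ᵥ (a - β)) := by
    rw [hres]
    simp only [l2sq_eq_dotProduct, sub_dotProduct, dotProduct_sub, dotProduct_comm (D *ᵥ (a - β)) u]
    ring
  change (1 / 2) * l2sq (x - D *ᵥ a) + lam * l1 a - ((1 / 2) * l2sq u + lam * l1 β) = _
  rw [hsq, hcross]
  simp only [l1, dotProduct, Finset.sum_sub_distrib, Finset.mul_sum]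
  ring

theorem lasso_lt_of_fuchs {β : Fin p → ℝ} {J : Finset (Fin p)} (hlam : 0 ≤ lam)
    (hβ : ∀ i ∉ J, β i = 0)
    (hinj : ∀ g : Fin p → ℝ, (∀ i ∉ J, g i = 0) → g ≠ 0 → 0 < l2sq (D *ᵥ g))
    (hon : ∀ i ∈ J, (Dᵀ *ᵥ (x - D *ᵥ β)) i = lam * Real.sign (β i))
    (hoff : ∀ i ∉ J, |(Dᵀ *ᵥ (x - D *ᵥ β)) i| < lam) {a : Fin p → ℝ} (ha : a ≠ β) :
    lasso lam x D β < lasso lam x D a := by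
  set c := Dᵀ *ᵥ (x - D *ᵥ β)
  have hc : ∀ i, |c i| ≤ lam := fun i => by
    by_cases hi : i ∈ J
    · rw [hon i hi, abs_mul, abs_of_nonneg hlam]
      exact mul_le_of_le_one_right hlam (Real.abs_sign_le_one _)
    · exact (hoff i hi).le
  have hterm : ∀ i, 0 ≤ lam * |a i| - c i * a i := fun i => by
    have := mul_le_mul_of_nonneg_right (hc i) (abs_nonneg (a i))
    linarith [abs_mul (c i) (a i) ▸ le_abs_self (c i * a i)]
  have hβterm : ∀ i, lam * |β i| - c i * β i = 0 := fun i => by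
    by_cases hi : i ∈ J
    · rw [hon i hi, mul_assoc, Real.sign_mul_self_eq_abs, sub_self]
    · rw [hβ i hi, abs_zero, mul_zero, mul_zero, sub_zero]
  have key : lasso lam x D a - lasso lam x D β = (1 / 2) * l2sq (D *ᵥ (a - β))
      + ∑ i, (lam * |a i| - c i * a i) - ∑ i, (lam * |β i| - c i * β i) := lasso_sub_lasso a β
  rw [Finset.sum_eq_zero fun i _ => hβterm i, sub_zero] at key
  suffices 0 < (1 / 2) * l2sq (D *ᵥ (a - β)) + ∑ i, (lam * |a i| - c i * a i) by linarith
  have hsum := Finset.sum_nonneg fun i (_ : i ∈ Finset.univ) => hterm i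
  by_cases hsupp : ∀ i ∉ J, a i = 0
  · have := hinj (a - β) (fun i hi => by simp [hsupp i hi, hβ i hi]) (sub_ne_zero.2 ha)
    linarith
  · push Not at hsupp
    obtain ⟨j, hj, haj⟩ := hsupp
    have hj_pos : 0 < lam * |a j| - c j * a j := by
      have := mul_lt_mul_of_pos_right (hoff j hj) (abs_pos.2 haj)
      linarith [abs_mul (c j) (a j) ▸ le_abs_self (c j * a j)]
    have := Finset.single_le_sum (fun i _ => hterm i) (Finset.mem_univ j)
    linarith [l2sq_nonneg (D *ᵥ (a - β))]

lemma fobj_eq_lasso_of_forall_le {β : Fin p → ℝ} (h : ∀ a, lasso lam x D β ≤ lasso lam x D a) :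
    fobj lam x D = lasso lam x D β :=
  le_antisymm (ciInf_le ⟨_, Set.forall_mem_range.2 h⟩ β) (le_ciInf h)

end Lasso

section Candidate

variable {m p : ℕ} {lam : ℝ} {x : Fin m → ℝ} {D : Matrix (Fin m) (Fin p) ℝ} {J : Finset (Fin p)}
  {s : Fin p → ℝ}

lemma alphaHat_of_not_mem {i : Fin p} (hi : i ∉ J) : alphaHat lam x D J s i = 0 := dif_neg hi

lemma restrict_alphaHat :
    J.restrict (alphaHat lam x D J s) = theta D J *ᵥ ((colsub D J)ᵀ *ᵥ x - lam • J.restrict s) := by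
  ext ⟨i, hi⟩
  simp only [Finset.restrict, alphaHat, dif_pos hi, pinv, ← mulVec_mulVec, mulVec_sub, mulVec_smul,
    Pi.sub_apply, Pi.smul_apply, smul_eq_mul]
  rfl

lemma gram_mulVec_restrict_alphaHat (hG : _root_.gram D J * theta D J = 1) :
    _root_.gram D J *ᵥ J.restrict (alphaHat lam x D J s)
      = (colsub D J)ᵀ *ᵥ x - lam • J.restrict s := by
  rw [restrict_alphaHat, mulVec_mulVec, hG, one_mulVec]

lemma restrict_transpose_mulVec_sub_alphaHat (hG : _root_.gram D J * theta D J = 1) :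
    J.restrict (Dᵀ *ᵥ (x - D *ᵥ alphaHat lam x D J s)) = lam • J.restrict s := by
  rw [← transpose_colsub_mulVec, mulVec_eq_colsub_mulVec_restrict D J fun i => alphaHat_of_not_mem,
    mulVec_sub, mulVec_mulVec, ← _root_.gram, gram_mulVec_restrict_alphaHat hG, sub_sub_cancel]

lemma lasso_alphaHat (hG : _root_.gram D J * theta D J = 1)
    (hs : ∀ i ∈ J, s i * alphaHat lam x D J s i = |alphaHat lam x D J s i|) :
    lasso lam x D (alphaHat lam x D J s) = phi lam x D J s := by
  set z := J.restrict (alphaHat lam x D J s)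
  set w := (colsub D J)ᵀ *ᵥ x - lam • J.restrict s
  have hsupp : ∀ i ∉ J, alphaHat lam x D J s i = 0 := fun i => alphaHat_of_not_mem
  have hl1 : l1 (alphaHat lam x D J s) = J.restrict s ⬝ᵥ z := by
    rw [l1, ← Finset.sum_subset (Finset.subset_univ J) fun i _ hi => by rw [hsupp i hi, abs_zero],
      ← Finset.sum_coe_sort J]
    exact Finset.sum_congr rfl fun a _ => (hs a.1 a.2).symm
  have hl2 : l2sq (x - D *ᵥ alphaHat lam x D J s)
      = x ⬝ᵥ x - 2 * (((colsub D J)ᵀ *ᵥ x) ⬝ᵥ z) + w ⬝ᵥ z := by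
    have hDz : D *ᵥ alphaHat lam x D J s = colsub D J *ᵥ z :=
      mulVec_eq_colsub_mulVec_restrict D J hsupp
    rw [hDz, l2sq_eq_dotProduct]
    have hquad : (colsub D J *ᵥ z) ⬝ᵥ (colsub D J *ᵥ z) = w ⬝ᵥ z := by
      rw [← l2sq_eq_dotProduct, l2sq_colsub_mulVec, gram_mulVec_restrict_alphaHat hG,
        dotProduct_comm]
    have hcross : x ⬝ᵥ colsub D J *ᵥ z = ((colsub D J)ᵀ *ᵥ x) ⬝ᵥ z := by
      rw [dotProduct_mulVec, ← mulVec_transpose]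
    simp only [sub_dotProduct, dotProduct_sub, hquad, hcross, dotProduct_comm (colsub D J *ᵥ z) x]
    ring
  have hw : w ⬝ᵥ z = ((colsub D J)ᵀ *ᵥ x) ⬝ᵥ z - lam * (J.restrict s ⬝ᵥ z) := by
    rw [sub_dotProduct, smul_dotProduct, smul_eq_mul]
  have hphi : phi lam x D J s = (1 / 2) * (x ⬝ᵥ x - w ⬝ᵥ theta D J *ᵥ w) := by
    simp [phi, w, l2sq_eq_dotProduct, dotProduct, mulVec, Finset.mul_sum, mul_assoc]
  change (1 / 2) * l2sq (x - D *ᵥ alphaHat lam x D J s) + lam * l1 (alphaHat lam x D J s) = _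
  rw [hl2, hl1, hphi, ← restrict_alphaHat]
  linarith

end Candidate

section Recovery

variable {m p k : ℕ} {μ lam η : ℝ} {x : Fin m → ℝ} {D : Matrix (Fin m) (Fin p) ℝ}
  {J : Finset (Fin p)} {s αo : Fin p → ℝ}

lemma gram_mul_theta_eq_one (hD : Oblique D) (hcoh : CoherenceBound D k μ) (hμ : μ < 1)
    (hJ : J.card ≤ k) : _root_.gram D J * theta D J = 1 := by
  have hunit : IsUnit (_root_.gram D J) := by
    simpa using isUnit_one_add_of_row_sum (row_sum_gram_sub_one_le hD hcoh hJ) hμ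
  exact mul_nonsing_inv _ ((isUnit_iff_isUnit_det _).1 hunit)

lemma abs_alphaHat_sub_le (hD : Oblique D) (hcoh : CoherenceBound D k μ) (hμ : μ < 1)
    (hJ : J.card ≤ k) (hαo : ∀ i ∉ J, αo i = 0) (hlam : 0 ≤ lam) (hs : ∀ i, |s i| ≤ 1)
    (hη : ∀ j, |(Dᵀ *ᵥ (x - D *ᵥ αo)) j| ≤ η) {i : Fin p} (hi : i ∈ J) :
    |alphaHat lam x D J s i - αo i| ≤ (η + lam) / (1 - μ) := by
  have hG := gram_mul_theta_eq_one hD hcoh hμ hJ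
  have hδ : (1 + (_root_.gram D J - 1)) *ᵥ (J.restrict (alphaHat lam x D J s) - J.restrict αo)
      = J.restrict (Dᵀ *ᵥ (x - D *ᵥ αo)) - lam • J.restrict s := by
    rw [add_sub_cancel, mulVec_sub, gram_mulVec_restrict_alphaHat hG, _root_.gram,
      ← mulVec_mulVec, ← mulVec_eq_colsub_mulVec_restrict D J hαo, ← transpose_colsub_mulVec,
      mulVec_sub]
    abel
  refine abs_le_div_of_row_sum (row_sum_gram_sub_one_le hD hcoh hJ) hμ
    (y := J.restrict (alphaHat lam x D J s) - J.restrict αo) (fun a => ?_) ⟨i, hi⟩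
  rw [hδ, Pi.sub_apply, Pi.smul_apply, smul_eq_mul]
  refine (abs_sub _ _).trans (add_le_add (hη a) ?_)
  rw [abs_mul, abs_of_nonneg hlam]
  exact mul_le_of_le_one_right hlam (hs a)

lemma abs_transpose_mul_mulVec_le (hcoh : CoherenceBound D k μ) (hJ : J.card ≤ k)
    {g : Fin p → ℝ} (hg : ∀ i ∉ J, g i = 0) {B : ℝ} (hB : ∀ i ∈ J, |g i| ≤ B) (hB0 : 0 ≤ B)
    {j : Fin p} (hj : j ∉ J) : |((Dᵀ * D) *ᵥ g) j| ≤ μ * B := by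
  have hsum : ((Dᵀ * D) *ᵥ g) j = ∑ i ∈ J, (Dᵀ * D) i j * g i := by
    rw [mulVec, dotProduct, ← Finset.sum_subset (Finset.subset_univ J) fun i _ hi => by
      rw [hg i hi, mul_zero]]
    exact Finset.sum_congr rfl fun i _ => by rw [(isSymm_transpose_mul D).apply]
  calc |((Dᵀ * D) *ᵥ g) j| ≤ ∑ i ∈ J, |(Dᵀ * D) i j| * B := by
        rw [hsum]
        refine (Finset.abs_sum_le_sum_abs _ _).trans (Finset.sum_le_sum fun i hi => ?_)
        rw [abs_mul]
        exact mul_le_mul_of_nonneg_left (hB i hi) (abs_nonneg _)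
    _ ≤ μ * B := by
        rw [← Finset.sum_mul]
        exact mul_le_mul_of_nonneg_right (hcoh J hJ j hj) hB0

theorem abs_transpose_mulVec_sub_alphaHat_lt (hD : Oblique D) (hcoh : CoherenceBound D k μ)
    (hμ : μ < 1 / 2) (hJ : J.card ≤ k) (hαo : ∀ i ∉ J, αo i = 0) (hlam : 0 ≤ lam)
    (hs : ∀ i, |s i| ≤ 1) (hη : ∀ j, |(Dᵀ *ᵥ (x - D *ᵥ αo)) j| ≤ η)
    (hηlam : η < lam * (1 - 2 * μ)) {j : Fin p} (hj : j ∉ J) :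
    |(Dᵀ *ᵥ (x - D *ᵥ alphaHat lam x D J s)) j| < lam := by
  have hμ1 : 0 < 1 - μ := by linarith
  have hB0 : 0 ≤ (η + lam) / (1 - μ) :=
    div_nonneg (by linarith [(abs_nonneg _).trans (hη j)]) hμ1.le
  have hres : Dᵀ *ᵥ (x - D *ᵥ alphaHat lam x D J s)
      = Dᵀ *ᵥ (x - D *ᵥ αo) - (Dᵀ * D) *ᵥ (alphaHat lam x D J s - αo) := by
    rw [← mulVec_mulVec, ← mulVec_sub, mulVec_sub D, sub_sub_sub_cancel_right]
  have hcorr := abs_transpose_mul_mulVec_le hcoh hJ (g := alphaHat lam x D J s - αo)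
    (fun i hi => by rw [Pi.sub_apply, alphaHat_of_not_mem hi, hαo i hi, sub_zero])
    (fun i hi => abs_alphaHat_sub_le hD hcoh (by linarith) hJ hαo hlam hs hη hi) hB0 hj
  have hlt : μ * ((η + lam) / (1 - μ)) < lam - η := by
    rw [← mul_div_assoc, div_lt_iff₀ hμ1]
    linarith
  rw [hres, Pi.sub_apply]
  linarith [abs_sub ((Dᵀ *ᵥ (x - D *ᵥ αo)) j) (((Dᵀ * D) *ᵥ (alphaHat lam x D J s - αo)) j), hη j]

theorem alphaHat_exact_recovery (hD : Oblique D) (hcoh : CoherenceBound D k μ) (hμ : μ < 1 / 2)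
    (hJ : J.card ≤ k) (hsupp : ∀ i, i ∈ J ↔ αo i ≠ 0) (hlam : 0 < lam)
    (hfloor : ∀ i ∈ J, 2 * lam ≤ |αo i|) (hη : ∀ j, |(Dᵀ *ᵥ (x - D *ᵥ αo)) j| ≤ η)
    (hηlam : η < lam * (1 - 2 * μ)) :
    (∀ a, a ≠ alphaHat lam x D J (sgnv αo) →
      lasso lam x D (alphaHat lam x D J (sgnv αo)) < lasso lam x D a) ∧
    (∀ i, Real.sign (alphaHat lam x D J (sgnv αo) i) = Real.sign (αo i)) ∧
    fobj lam x D = phi lam x D J (sgnv αo) := by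
  set β := alphaHat lam x D J (sgnv αo)
  have hβ0 : ∀ i ∉ J, β i = 0 := fun i hi => alphaHat_of_not_mem hi
  have hαo : ∀ i ∉ J, αo i = 0 := fun i hi => not_not.1 (mt (hsupp i).2 hi)
  have hμ1 : 0 < 1 - μ := by linarith
  have hG := gram_mul_theta_eq_one hD hcoh (by linarith) hJ
  have hβ : ∀ i ∈ J, |β i - αo i| ≤ (η + lam) / (1 - μ) := fun i hi =>
    abs_alphaHat_sub_le hD hcoh (by linarith) hJ hαo hlam.le (fun i => Real.abs_sign_le_one _) hη hi
  have hsign : ∀ i, Real.sign (β i) = Real.sign (αo i) := fun i => by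
    by_cases hi : i ∈ J
    · refine Real.sign_eq_of_abs_sub_lt ((hβ i hi).trans_lt (lt_of_lt_of_le ?_ (hfloor i hi)))
      rw [div_lt_iff₀ hμ1]
      linarith
    · rw [hβ0 i hi, hαo i hi]
  have hon : ∀ i ∈ J, (Dᵀ *ᵥ (x - D *ᵥ β)) i = lam * Real.sign (β i) := fun i hi => by
    rw [hsign i]
    exact congrFun (restrict_transpose_mulVec_sub_alphaHat hG) ⟨i, hi⟩
  have hoff : ∀ j ∉ J, |(Dᵀ *ᵥ (x - D *ᵥ β)) j| < lam := fun j hj =>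
    abs_transpose_mulVec_sub_alphaHat_lt hD hcoh hμ hJ hαo hlam.le
      (fun i => Real.abs_sign_le_one _) hη hηlam hj
  have hmin : ∀ a, a ≠ β → lasso lam x D β < lasso lam x D a := fun a ha =>
    lasso_lt_of_fuchs hlam.le hβ0
      (fun g hg hne => l2sq_mulVec_pos hD hcoh (by linarith) hJ hg hne) hon hoff ha
  refine ⟨hmin, hsign, ?_⟩
  rw [fobj_eq_lasso_of_forall_le fun a => (eq_or_ne a β).elim (fun h => h ▸ le_rfl) fun h =>
    (hmin a h).le]
  refine lasso_alphaHat hG fun i _ => ?_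
  change Real.sign (αo i) * β i = |β i|
  rw [← hsign i, Real.sign_mul_self_eq_abs]

end Recovery

lemma abs_transpose_mulVec_xsig_sub_le {m p : ℕ} {D Do : Matrix (Fin m) (Fin p) ℝ}
    (hD : Oblique D) (αo : Fin p → ℝ) (ε : Fin m → ℝ) (j : Fin p) :
    |(Dᵀ *ᵥ (xsig Do αo ε - D *ᵥ αo)) j| ≤ l2 ε + frob (D - Do) * l2 αo := by
  have hx : xsig Do αo ε - D *ᵥ αo = ε + (Do - D) *ᵥ αo := by
    ext r
    simp only [xsig, Pi.sub_apply, Pi.add_apply, sub_mulVec]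
    ring
  have hfrob : frob (Do - D) = frob (D - Do) := by
    simp only [frob, frobSq, Matrix.sub_apply]
    congr 1
    exact Finset.sum_congr rfl fun r _ => Finset.sum_congr rfl fun i _ => by ring
  calc |(Dᵀ *ᵥ (xsig Do αo ε - D *ᵥ αo)) j| ≤ l2 (ε + (Do - D) *ᵥ αo) :=
        hx ▸ abs_transpose_mulVec_le hD _ j
    _ ≤ l2 ε + l2 ((Do - D) *ᵥ αo) := l2_add_le _ _
    _ ≤ l2 ε + frob (D - Do) * l2 αo := by
        rw [← hfrob]
        gcongr
        exact l2_mulVec_le _ _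

-- `7 / 2 = 1 + 5 / 2`, and `5 / 2` bounds `1 + √(1 + μ)` for `μ < 1 / 2`.
lemma recovery_condition_of_perturbation {lam μ κ r M ν : ℝ} (hlam : 0 < lam) (hμ : μ < 1 / 2)
    (hr : 0 ≤ r) (hM : 0 ≤ M) (hν : 0 ≤ ν) (hκ : κ * (2 * lam) ≤ M)
    (hν' : ν < lam * (1 - 2 * μ) - 7 / 2 * M * r) :
    ν + M * r < lam * (1 - 2 * (μ + (1 + √(1 + μ)) * (κ * r))) ∧
      μ + (1 + √(1 + μ)) * (κ * r) < 1 / 2 := by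
  have hsqrt : √(1 + μ) ≤ 3 / 2 := Real.sqrt_le_iff.2 ⟨by norm_num, by linarith⟩
  have hc : 1 + √(1 + μ) ≤ 5 / 2 := by linarith
  have hpert : lam * (2 * ((1 + √(1 + μ)) * (κ * r))) ≤ 5 / 2 * (M * r) := calc
    _ = (1 + √(1 + μ)) * r * (κ * (2 * lam)) := by ring
    _ ≤ (1 + √(1 + μ)) * r * M :=
        mul_le_mul_of_nonneg_left hκ (mul_nonneg (by positivity) hr)
    _ ≤ 5 / 2 * (M * r) := by nlinarith [mul_le_mul_of_nonneg_right hc (mul_nonneg hM hr)]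
  have hlt : ν + M * r < lam * (1 - 2 * (μ + (1 + √(1 + μ)) * (κ * r))) := by linarith
  refine ⟨hlt, ?_⟩
  have := (pos_iff_pos_of_mul_pos ((add_nonneg hν (mul_nonneg hM hr)).trans_lt hlt)).1 hlam
  linarith

theorem stmt4_general {m p k : ℕ} (Do : Matrix (Fin m) (Fin p) ℝ) (hDo : Oblique Do)
    (hmu : mu k Do < 1/2)
    (J : Finset (Fin p)) (hJcard : J.card = k)
    (αo : Fin p → ℝ) (hsupp : ∀ i, i ∈ J ↔ αo i ≠ 0)
    (alphaMin Malpha Meps : ℝ) (hMalpha : 0 < Malpha)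
    (hfloor : ∀ i ∈ J, alphaMin ≤ |αo i|) (hbound : l2 αo ≤ Malpha)
    (ε : Fin m → ℝ) (hnoise : l2 ε ≤ Meps)
    (lam : ℝ) (hlam : 0 < lam) (hlam2 : lam ≤ alphaMin / 2)
    (D : Matrix (Fin m) (Fin p) ℝ) (hD : Oblique D)
    (hMeps : Meps < lam * (1 - 2 * mu k Do) - (7/2) * Malpha * frob (D - Do)) :
    (∀ a : Fin p → ℝ, a ≠ alphaHat lam (xsig Do αo ε) D J (sgnv αo) →
      lasso lam (xsig Do αo ε) D (alphaHat lam (xsig Do αo ε) D J (sgnv αo))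
        < lasso lam (xsig Do αo ε) D a) ∧
    (∀ i, Real.sign (alphaHat lam (xsig Do αo ε) D J (sgnv αo) i) = Real.sign (αo i)) ∧
    fobj lam (xsig Do αo ε) D = phi lam (xsig Do αo ε) D J (sgnv αo) ∧
    (∀ a : Fin p → ℝ, a ≠ alphaHat lam (xsig Do αo ε) Do J (sgnv αo) →
      lasso lam (xsig Do αo ε) Do (alphaHat lam (xsig Do αo ε) Do J (sgnv αo))
        < lasso lam (xsig Do αo ε) Do a) ∧
    (∀ i, Real.sign (alphaHat lam (xsig Do αo ε) Do J (sgnv αo) i) = Real.sign (αo i)) ∧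
    fobj lam (xsig Do αo ε) Do = phi lam (xsig Do αo ε) Do J (sgnv αo) ∧
    fobj lam (xsig Do αo ε) D - fobj lam (xsig Do αo ε) Do
      = phi lam (xsig Do αo ε) D J (sgnv αo) - phi lam (xsig Do αo ε) Do J (sgnv αo) := by
  have hfloor' : ∀ i ∈ J, 2 * lam ≤ |αo i| := fun i hi => by linarith [hfloor i hi]
  have hkM : √k * (2 * lam) ≤ Malpha :=
    hJcard ▸ (sqrt_card_mul_le_l2 (by linarith) hfloor').trans hbound
  have hηD : ∀ j, |(Dᵀ *ᵥ (xsig Do αo ε - D *ᵥ αo)) j| ≤ Meps + Malpha * frob (D - Do) :=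
    fun j => (abs_transpose_mulVec_xsig_sub_le hD αo ε j).trans <| add_le_add hnoise <|
      by rw [mul_comm]; exact mul_le_mul_of_nonneg_right hbound (frob_nonneg _)
  have hηDo : ∀ j, |(Doᵀ *ᵥ (xsig Do αo ε - Do *ᵥ αo)) j| ≤ Meps := fun j => by
    have h := abs_transpose_mulVec_xsig_sub_le (Do := Do) hDo αo ε j
    rw [sub_self, frob_zero, zero_mul, add_zero] at h
    exact h.trans hnoise
  obtain ⟨hηlamD, hμD⟩ := recovery_condition_of_perturbation hlam hmu (frob_nonneg (D - Do))
    hMalpha.le ((l2_nonneg ε).trans hnoise) hkM hMeps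
  obtain ⟨hminD, hsignD, hfD⟩ := alphaHat_exact_recovery hD
    (coherenceBound_of_frob_sub hDo hD (coherenceBound_mu hDo k)) hμD hJcard.le hsupp hlam
    hfloor' hηD hηlamD
  obtain ⟨hminDo, hsignDo, hfDo⟩ := alphaHat_exact_recovery hDo (coherenceBound_mu hDo k) hmu
    hJcard.le hsupp hlam hfloor' hηDo
    (by linarith [mul_nonneg hMalpha.le (frob_nonneg (D - Do))])
  exact ⟨hminD, hsignD, hfD, hminDo, hsignDo, hfDo, by rw [hfD, hfDo]⟩

/-- Proposition (exact recovery, bounded model): under coherence μ_k(D°) < 1/2, a small enough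
regularization parameter, a dictionary D close enough to D° and a small enough noise level,
α̂_x(D|s°) is the unique Lasso minimizer, recovers the sign pattern of α°, and f_x(D) = φ_x(D|s°);
the same holds at D°, so that Δf_x(D;D°) = Δφ_x(D;D°|s°). -/
theorem stmt4 {m p k : ℕ} (Do : Matrix (Fin m) (Fin p) ℝ) (hDo : Oblique Do)
    (hmu : mu k Do < 1/2)
    (J : Finset (Fin p)) (hJcard : J.card = k)
    (αo : Fin p → ℝ) (hsupp : ∀ i, i ∈ J ↔ αo i ≠ 0)
    (alphaMin Malpha Meps : ℝ) (halphaMin : 0 < alphaMin) (hMalpha : 0 < Malpha)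
    (hfloor : ∀ i ∈ J, alphaMin ≤ |αo i|) (hbound : l2 αo ≤ Malpha)
    (ε : Fin m → ℝ) (hnoise : l2 ε ≤ Meps)
    (lam : ℝ) (hlam : 0 < lam) (hlam2 : lam ≤ alphaMin / 2)
    (D : Matrix (Fin m) (Fin p) ℝ) (hD : Oblique D)
    (hr : frob (D - Do) < (2 * lam / (7 * Malpha)) * (1 - 2 * mu k Do))
    (hMeps : Meps < lam * (1 - 2 * mu k Do) - (7/2) * Malpha * frob (D - Do)) :
    (∀ a : Fin p → ℝ, a ≠ alphaHat lam (xsig Do αo ε) D J (sgnv αo) →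
      lasso lam (xsig Do αo ε) D (alphaHat lam (xsig Do αo ε) D J (sgnv αo))
        < lasso lam (xsig Do αo ε) D a) ∧
    (∀ i, Real.sign (alphaHat lam (xsig Do αo ε) D J (sgnv αo) i) = Real.sign (αo i)) ∧
    fobj lam (xsig Do αo ε) D = phi lam (xsig Do αo ε) D J (sgnv αo) ∧
    (∀ a : Fin p → ℝ, a ≠ alphaHat lam (xsig Do αo ε) Do J (sgnv αo) →
      lasso lam (xsig Do αo ε) Do (alphaHat lam (xsig Do αo ε) Do J (sgnv αo))
        < lasso lam (xsig Do αo ε) Do a) ∧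
    (∀ i, Real.sign (alphaHat lam (xsig Do αo ε) Do J (sgnv αo) i) = Real.sign (αo i)) ∧
    fobj lam (xsig Do αo ε) Do = phi lam (xsig Do αo ε) Do J (sgnv αo) ∧
    fobj lam (xsig Do αo ε) D - fobj lam (xsig Do αo ε) Do
      = phi lam (xsig Do αo ε) D J (sgnv αo) - phi lam (xsig Do αo ε) Do J (sgnv αo) :=
  stmt4_general Do hDo hmu J hJcard αo hsupp alphaMin Malpha Meps hMalpha hfloor hbound ε hnoise lam
    hlam hlam2 D hD hMeps
end

section
/- Let J ⊆ {1,…,p}, let α° ∈ ℝ^p be supported on J with sign vector s° = sign(α°), and let x ∈ ℝ^m be arbitrary. Let D ∈ ℝ^{m×p} be such that D_JᵀD_J is invertible, and λ > 0. Then ‖(α̂_x(D|s°) − α°)_J‖_∞ ≤ |||(D_JᵀD_J)^{-1}|||_∞ · (λ + ‖D_Jᵀ(x − Dα°)‖_∞). -/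
open MeasureTheory Matrix Finset
open scoped ENNReal NNReal

/-! The error of the closed-form candidate on its support is `Θ_J (D_Jᵀ(x − Dα°) − λ s°_J)`,
because `α°_J = Θ_J D_Jᵀ D α°` when `α°` is supported on `J`. The bound then follows from
`‖A v‖_∞ ≤ |||A|||_∞ ‖v‖_∞` and `|s°_j| ≤ 1`. -/

section SupNorm

variable {n q : Type*}

theorem linf_nonneg (v : n → ℝ) : 0 ≤ linf v :=
  Real.sSup_nonneg <| Set.forall_mem_range.2 fun i => abs_nonneg (v i)

theorem abs_le_linf [Finite n] (v : n → ℝ) (i : n) : |v i| ≤ linf v :=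
  le_csSup (Set.finite_range _).bddAbove ⟨i, rfl⟩

theorem linf_le {v : n → ℝ} {c : ℝ} (hc : 0 ≤ c) (h : ∀ i, |v i| ≤ c) : linf v ≤ c :=
  Real.sSup_le (Set.forall_mem_range.2 h) hc

theorem opInf_nonneg [Fintype q] (A : Matrix n q ℝ) : 0 ≤ opInf A :=
  Real.sSup_nonneg <| Set.forall_mem_range.2 fun _ => sum_nonneg fun _ _ => abs_nonneg _

theorem sum_abs_le_opInf [Finite n] [Fintype q] (A : Matrix n q ℝ) (i : n) :
    ∑ j, |A i j| ≤ opInf A :=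
  le_csSup (Set.finite_range _).bddAbove ⟨i, rfl⟩

theorem linf_mulVec_le [Finite n] [Fintype q] (A : Matrix n q ℝ) (v : q → ℝ) :
    linf (A *ᵥ v) ≤ opInf A * linf v := by
  refine linf_le (mul_nonneg (opInf_nonneg A) (linf_nonneg v)) fun i => ?_
  calc |(A *ᵥ v) i| ≤ ∑ j, |A i j| * |v j| := by
        simpa only [mulVec, dotProduct, abs_mul] using
          abs_sum_le_sum_abs (fun j => A i j * v j) univ
    _ ≤ ∑ j, |A i j| * linf v :=
        sum_le_sum fun j _ => mul_le_mul_of_nonneg_left (abs_le_linf v j) (abs_nonneg _)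
    _ = (∑ j, |A i j|) * linf v := (sum_mul _ _ _).symm
    _ ≤ opInf A * linf v := mul_le_mul_of_nonneg_right (sum_abs_le_opInf A i) (linf_nonneg v)

theorem linf_sub_smul_le [Finite n] {lam : ℝ} (hlam : 0 ≤ lam) (v s : n → ℝ)
    (hs : ∀ i, |s i| ≤ 1) : linf (v - lam • s) ≤ lam + linf v := by
  refine linf_le (add_nonneg hlam (linf_nonneg v)) fun i => ?_
  calc |v i - lam * s i| ≤ |v i| + lam * |s i| := by
        simpa only [abs_mul, abs_of_nonneg hlam] using abs_sub (v i) (lam * s i)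
    _ ≤ linf v + lam * 1 :=
        add_le_add (abs_le_linf v i) (mul_le_mul_of_nonneg_left (hs i) hlam)
    _ = lam + linf v := by ring

end SupNorm

theorem abs_sign_le_one (r : ℝ) : |Real.sign r| ≤ 1 := by
  rcases Real.sign_apply_eq r with h | h | h <;> simp [h]

section Support

variable {m p : ℕ} (D : Matrix (Fin m) (Fin p) ℝ) (J : Finset (Fin p))

theorem colsub_mulVec_restrict {α : Fin p → ℝ} (hsupp : ∀ i, i ∉ J → α i = 0) :
    colsub D J *ᵥ (fun a : J => α a) = D *ᵥ α := by
  funext r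
  simp only [mulVec, dotProduct, colsub]
  rw [J.sum_coe_sort fun j => D r j * α j]
  exact sum_subset (subset_univ J) fun j _ hj => by rw [hsupp j hj, mul_zero]

theorem theta_mulVec_gram_mulVec (hinv : IsUnit (gram D J)) (w : J → ℝ) :
    theta D J *ᵥ (gram D J *ᵥ w) = w := by
  rw [theta, mulVec_mulVec, nonsing_inv_mul _ ((isUnit_iff_isUnit_det _).mp hinv), one_mulVec]

theorem alphaHat_sub_restrict_eq (hinv : IsUnit (gram D J)) (lam : ℝ) (x : Fin m → ℝ)
    (s α : Fin p → ℝ) (hsupp : ∀ i, i ∉ J → α i = 0) :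
    (fun a : J => alphaHat lam x D J s a - α a)
      = theta D J *ᵥ ((colsub D J)ᵀ *ᵥ (x - D *ᵥ α) - lam • fun a : J => s a) := by
  have hα : (fun a : J => α a) = theta D J *ᵥ ((colsub D J)ᵀ *ᵥ (D *ᵥ α)) := by
    rw [← colsub_mulVec_restrict D J hsupp, mulVec_mulVec _ (colsub D J)ᵀ]
    exact (theta_mulVec_gram_mulVec D J hinv _).symm
  have hhat : (fun a : J => alphaHat lam x D J s a)
      = theta D J *ᵥ ((colsub D J)ᵀ *ᵥ x) - lam • theta D J *ᵥ fun a : J => s a := by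
    funext a
    simp only [alphaHat, dif_pos a.2, pinv, ← mulVec_mulVec, Pi.sub_apply, Pi.smul_apply,
      smul_eq_mul]
  change (fun a : J => alphaHat lam x D J s a) - (fun a : J => α a) = _
  rw [hhat, hα]
  simp only [mulVec_sub, mulVec_smul]
  abel

end Support

/-- Lemma: bound on ‖(α̂_x(D|s°) − α°)_J‖_∞ in terms of |||(D_JᵀD_J)⁻¹|||_∞ and
‖D_Jᵀ(x − Dα°)‖_∞. -/
theorem stmt12 {m p : ℕ} (D : Matrix (Fin m) (Fin p) ℝ) (J : Finset (Fin p))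
    (hinv : IsUnit (gram D J)) (lam : ℝ) (hlam : 0 < lam)
    (αo : Fin p → ℝ) (hsupp : ∀ i, i ∉ J → αo i = 0) (x : Fin m → ℝ) :
    linf (fun a : J => alphaHat lam x D J (sgnv αo) a.1 - αo a.1)
      ≤ opInf (theta D J)
          * (lam + linf (fun a : J => ∑ r, D r a.1 * (x r - D.mulVec αo r))) := by
  have hcorr : (fun a : J => ∑ r, D r a.1 * (x r - D.mulVec αo r))
      = (colsub D J)ᵀ *ᵥ (x - D *ᵥ αo) := rfl
  rw [alphaHat_sub_restrict_eq D J hinv lam x _ αo hsupp, hcorr]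
  exact (linf_mulVec_le _ _).trans <| mul_le_mul_of_nonneg_left
    (linf_sub_smul_le hlam.le _ _ fun a => abs_sign_le_one _) (opInf_nonneg _)
end

section
/- Let D, D° ∈ ℝ^{m×p} both have unit ℓ₂-norm columns and satisfy ‖D − D°‖_F ≤ r. Then for every k ≤ p, μ_k(D) ≤ μ_k(D°) + √k · r · (2 + μ_{k−1}(D°)). -/
open MeasureTheory Matrix Finset
open scoped ENNReal NNReal

/-!
Split `⟨dᵢ, dⱼ⟩ = ⟨d°ᵢ, d°ⱼ⟩ + ⟨dᵢ - d°ᵢ, dⱼ⟩ + ⟨d°ᵢ, dⱼ - d°ⱼ⟩` and sum over `i ∈ J`.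
The first sum is at most `μ_k(D°)`. The second is at most `√k ‖D - D°‖_F` by
Cauchy–Schwarz, once in `ℝᵐ` (as `‖dⱼ‖ = 1`) and once over `J`. With `s` the signs of
the third sum's terms, that sum is `⟨D°_J s, dⱼ - d°ⱼ⟩`; expanding `‖D°_J s‖²` through
the Gram matrix, every row contributes its unit diagonal entry plus at most `k - 1`
off-diagonal ones, so `‖D°_J s‖ ≤ √(k (1 + μ_{k-1}(D°))) ≤ √k (1 + μ_{k-1}(D°))`,
while `‖dⱼ - d°ⱼ‖ ≤ r`.
-/

open Real

section Inequalities

variable {ι : Type*}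

lemma abs_sum_mul_le_sqrt_mul_sqrt (s : Finset ι) (f g : ι → ℝ) :
    |∑ i ∈ s, f i * g i| ≤ √(∑ i ∈ s, f i ^ 2) * √(∑ i ∈ s, g i ^ 2) := by
  refine abs_le.2 ⟨neg_le.1 ?_, sum_mul_le_sqrt_mul_sqrt s f g⟩
  simpa [neg_sq] using sum_mul_le_sqrt_mul_sqrt s (fun i => -f i) g

lemma sum_sqrt_le_sqrt_card_mul_sqrt_sum (s : Finset ι) {f : ι → ℝ} (hf : ∀ i, 0 ≤ f i) :
    ∑ i ∈ s, √(f i) ≤ √(#s : ℝ) * √(∑ i ∈ s, f i) := by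
  simpa using sum_sqrt_mul_sqrt_le s (fun _ => zero_le_one) hf

lemma abs_dot_le_add_abs_dot_sub [Fintype ι] (a b a' b' : ι → ℝ) :
    |∑ x, a x * b x| ≤
      |∑ x, a' x * b' x| + |∑ x, (a x - a' x) * b x| + |∑ x, a' x * (b x - b' x)| := by
  have hsplit : ∑ x, a x * b x =
      ∑ x, a' x * b' x + ∑ x, (a x - a' x) * b x + ∑ x, a' x * (b x - b' x) := by
    simp only [← Finset.sum_add_distrib]
    exact Finset.sum_congr rfl fun x _ => by ring
  rw [hsplit]
  exact (abs_add_le _ _).trans (add_le_add (abs_add_le _ _) le_rfl)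

end Inequalities

section Frobenius

variable {n q : Type*} [Fintype n] [Fintype q]

lemma sum_col_sq_le_frobSq (A : Matrix n q ℝ) (J : Finset q) :
    ∑ i ∈ J, ∑ x, A x i ^ 2 ≤ frobSq A := by
  calc ∑ i ∈ J, ∑ x, A x i ^ 2
      ≤ ∑ i, ∑ x, A x i ^ 2 :=
        Finset.sum_le_univ_sum_of_nonneg fun i => Finset.sum_nonneg fun x _ => sq_nonneg _
    _ = frobSq A := Finset.sum_comm

lemma sqrt_col_sq_le_frob (A : Matrix n q ℝ) (j : q) : √(∑ x, A x j ^ 2) ≤ frob A :=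
  sqrt_le_sqrt (by simpa using sum_col_sq_le_frobSq A {j})

lemma sum_abs_col_dot_le (A : Matrix n q ℝ) (J : Finset q) (v : n → ℝ) :
    ∑ i ∈ J, |∑ x, A x i * v x| ≤ √(#J : ℝ) * frob A * √(∑ x, v x ^ 2) := by
  calc ∑ i ∈ J, |∑ x, A x i * v x|
      ≤ ∑ i ∈ J, √(∑ x, A x i ^ 2) * √(∑ x, v x ^ 2) :=
        Finset.sum_le_sum fun i _ => abs_sum_mul_le_sqrt_mul_sqrt _ _ _
    _ = (∑ i ∈ J, √(∑ x, A x i ^ 2)) * √(∑ x, v x ^ 2) := (Finset.sum_mul ..).symm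
    _ ≤ √(#J : ℝ) * frob A * √(∑ x, v x ^ 2) := by
        gcongr
        calc ∑ i ∈ J, √(∑ x, A x i ^ 2)
            ≤ √(#J : ℝ) * √(∑ i ∈ J, ∑ x, A x i ^ 2) :=
              sum_sqrt_le_sqrt_card_mul_sqrt_sum J fun i => Finset.sum_nonneg fun x _ => sq_nonneg _
          _ ≤ √(#J : ℝ) * frob A := by gcongr; exact sqrt_le_sqrt (sum_col_sq_le_frobSq A J)

end Frobenius

section Coherence

variable {m p : ℕ}

lemma bddAbove_coherence_sums (k : ℕ) (D : Matrix (Fin m) (Fin p) ℝ) :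
    BddAbove {t : ℝ | ∃ J : Finset (Fin p), J.card ≤ k ∧ ∃ j, j ∉ J ∧
      t = ∑ i ∈ J, |∑ r, D r i * D r j|} := by
  refine (Set.finite_range fun q : Finset (Fin p) × Fin p =>
    ∑ i ∈ q.1, |∑ r, D r i * D r q.2|).subset ?_ |>.bddAbove
  rintro t ⟨J, -, j, -, rfl⟩
  exact ⟨(J, j), rfl⟩

lemma sum_abs_dot_le_mu {k : ℕ} (D : Matrix (Fin m) (Fin p) ℝ) {J : Finset (Fin p)}
    {j : Fin p} (hJ : J.card ≤ k) (hj : j ∉ J) :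
    ∑ i ∈ J, |∑ r, D r i * D r j| ≤ mu k D :=
  le_csSup (bddAbove_coherence_sums k D) ⟨J, hJ, j, hj, rfl⟩

lemma mu_nonneg (k : ℕ) (D : Matrix (Fin m) (Fin p) ℝ) : 0 ≤ mu k D :=
  Real.sSup_nonneg fun _ ⟨_, _, _, _, ht⟩ => ht ▸ Finset.sum_nonneg fun _ _ => abs_nonneg _

lemma Oblique.sum_sq {D : Matrix (Fin m) (Fin p) ℝ} (hD : Oblique D) (j : Fin p) :
    ∑ x, D x j ^ 2 = 1 :=
  hD j

variable {D : Matrix (Fin m) (Fin p) ℝ} {k : ℕ} {J : Finset (Fin p)} {s : Fin p → ℝ}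

lemma sum_mul_gram_row_le (hD : Oblique D) (hs : ∀ i, |s i| ≤ 1) (hJ : J.card ≤ k)
    {i : Fin p} (hi : i ∈ J) :
    ∑ i' ∈ J, s i * s i' * ∑ x, D x i * D x i' ≤ 1 + mu (k - 1) D := by
  rw [← Finset.add_sum_erase _ _ hi]
  have hdiag : s i * s i * ∑ x, D x i * D x i ≤ 1 := by
    have hsq : s i * s i ≤ 1 := by
      simpa [← sq, sq_abs] using pow_le_one₀ (abs_nonneg (s i)) (hs i) (n := 2)
    simpa [← sq, hD.sum_sq i] using hsq
  have hoff : ∑ i' ∈ J.erase i, s i * s i' * ∑ x, D x i * D x i' ≤ mu (k - 1) D := by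
    calc ∑ i' ∈ J.erase i, s i * s i' * ∑ x, D x i * D x i'
        ≤ ∑ i' ∈ J.erase i, |∑ x, D x i' * D x i| := by
          refine Finset.sum_le_sum fun i' _ => ?_
          have hsym : ∑ x, D x i * D x i' = ∑ x, D x i' * D x i :=
            Finset.sum_congr rfl fun x _ => mul_comm _ _
          rw [hsym]
          refine (le_abs_self _).trans ?_
          rw [abs_mul, abs_mul]
          exact mul_le_of_le_one_left (abs_nonneg _)
            (mul_le_one₀ (hs i) (abs_nonneg _) (hs i'))
      _ ≤ mu (k - 1) D :=
          sum_abs_dot_le_mu D (by rw [Finset.card_erase_of_mem hi]; omega)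
            (Finset.notMem_erase i J)
  linarith

lemma sum_sq_sum_mul_col_le (hD : Oblique D) (hs : ∀ i, |s i| ≤ 1) (hJ : J.card ≤ k) :
    ∑ x, (∑ i ∈ J, s i * D x i) ^ 2 ≤ k * (1 + mu (k - 1) D) := by
  have expand : ∑ x, (∑ i ∈ J, s i * D x i) ^ 2 =
      ∑ i ∈ J, ∑ i' ∈ J, s i * s i' * ∑ x, D x i * D x i' := by
    simp_rw [sq, Finset.sum_mul_sum, Finset.mul_sum]
    rw [Finset.sum_comm]
    refine Finset.sum_congr rfl fun i _ => ?_
    rw [Finset.sum_comm]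
    exact Finset.sum_congr rfl fun i' _ => Finset.sum_congr rfl fun x _ => by ring
  calc ∑ x, (∑ i ∈ J, s i * D x i) ^ 2
      = ∑ i ∈ J, ∑ i' ∈ J, s i * s i' * ∑ x, D x i * D x i' := expand
    _ ≤ ∑ _i ∈ J, (1 + mu (k - 1) D) :=
        Finset.sum_le_sum fun i hi => sum_mul_gram_row_le hD hs hJ hi
    _ ≤ k * (1 + mu (k - 1) D) := by
        rw [Finset.sum_const, nsmul_eq_mul]
        gcongr
        linarith [mu_nonneg (k - 1) D]

lemma sum_abs_col_dot_le_of_oblique (hD : Oblique D) (hJ : J.card ≤ k) (v : Fin m → ℝ) :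
    ∑ i ∈ J, |∑ x, D x i * v x| ≤ √k * (1 + mu (k - 1) D) * √(∑ x, v x ^ 2) := by
  set c : Fin p → ℝ := fun i => ∑ x, D x i * v x
  set sgn : Fin p → ℝ := fun i => if 0 ≤ c i then 1 else -1
  have hsgn : ∀ i, |sgn i| ≤ 1 := fun i => by
    by_cases h : 0 ≤ c i <;> simp [sgn, h]
  have habs : ∀ i, |c i| = sgn i * c i := fun i => by
    by_cases h : 0 ≤ c i
    · simp [sgn, h, abs_of_nonneg h]
    · simp [sgn, h, abs_of_neg (not_le.1 h)]
  have hmu : 1 ≤ 1 + mu (k - 1) D := by linarith [mu_nonneg (k - 1) D]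
  calc ∑ i ∈ J, |c i|
      = ∑ x, (∑ i ∈ J, sgn i * D x i) * v x := by
        simp only [habs, c, Finset.mul_sum, Finset.sum_mul]
        rw [Finset.sum_comm]
        exact Finset.sum_congr rfl fun x _ => Finset.sum_congr rfl fun i _ => by ring
    _ ≤ √(∑ x, (∑ i ∈ J, sgn i * D x i) ^ 2) * √(∑ x, v x ^ 2) :=
        sum_mul_le_sqrt_mul_sqrt _ _ _
    _ ≤ √(k * (1 + mu (k - 1) D)) * √(∑ x, v x ^ 2) := by
        gcongr; exact sum_sq_sum_mul_col_le hD hsgn hJ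
    _ ≤ √k * (1 + mu (k - 1) D) * √(∑ x, v x ^ 2) := by
        rw [sqrt_mul (Nat.cast_nonneg k)]
        gcongr
        exact sqrt_le_self_iff.2 (Or.inr hmu)

end Coherence

theorem stmt14_general {m p : ℕ} (D Do : Matrix (Fin m) (Fin p) ℝ)
    (hD : Oblique D) (hDo : Oblique Do) (r : ℝ) (hr : frob (D - Do) ≤ r)
    (k : ℕ) :
    mu k D ≤ mu k Do + Real.sqrt k * r * (2 + mu (k - 1) Do) := by
  have hfrob0 : 0 ≤ frob (D - Do) := sqrt_nonneg _
  have hr0 : 0 ≤ r := hfrob0.trans hr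
  have hmu0 := mu_nonneg (k - 1) Do
  refine Real.sSup_le ?_ (by have := mu_nonneg k Do; positivity)
  rintro t ⟨J, hJ, j, hj, rfl⟩
  have hsqrtJ : √(#J : ℝ) ≤ √k := sqrt_le_sqrt (by exact_mod_cast hJ)
  have hcol : √(∑ x, (D x j - Do x j) ^ 2) ≤ r :=
    (sqrt_col_sq_le_frob (D - Do) j).trans hr
  calc ∑ i ∈ J, |∑ x, D x i * D x j|
      ≤ ∑ i ∈ J, (|∑ x, Do x i * Do x j| + |∑ x, (D x i - Do x i) * D x j|
          + |∑ x, Do x i * (D x j - Do x j)|) :=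
        Finset.sum_le_sum fun i _ => abs_dot_le_add_abs_dot_sub _ _ _ _
    _ = ∑ i ∈ J, |∑ x, Do x i * Do x j| + ∑ i ∈ J, |∑ x, (D - Do) x i * D x j|
          + ∑ i ∈ J, |∑ x, Do x i * (D x j - Do x j)| := by
        simp only [Finset.sum_add_distrib, Matrix.sub_apply]
    _ ≤ mu k Do + √k * r * 1 + √k * (1 + mu (k - 1) Do) * r := by
        gcongr
        · exact sum_abs_dot_le_mu Do hJ hj
        · calc _ ≤ √(#J : ℝ) * frob (D - Do) * √(∑ x, D x j ^ 2) :=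
                sum_abs_col_dot_le _ _ _
            _ ≤ √k * r * 1 := by rw [hD.sum_sq j, sqrt_one]; gcongr
        · exact (sum_abs_col_dot_le_of_oblique hDo hJ _).trans (by gcongr)
    _ = mu k Do + √k * r * (2 + mu (k - 1) Do) := by ring

/-- Lemma: stability of the cumulative coherence on a Frobenius ball:
μ_k(D) ≤ μ_k(D°) + √k · r · (2 + μ_{k−1}(D°)). -/
theorem stmt14 {m p : ℕ} (D Do : Matrix (Fin m) (Fin p) ℝ)
    (hD : Oblique D) (hDo : Oblique Do) (r : ℝ) (hr : frob (D - Do) ≤ r)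
    (k : ℕ) (hk : k ≤ p) :
    mu k D ≤ mu k Do + Real.sqrt k * r * (2 + mu (k - 1) Do) :=
  stmt14_general D Do hD hDo r hr k
end
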